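/- arXiv:2312.13690 — 4 statements merged into one kernel-verified Lean document; each statement's English description precedes it below -/
import Mathlib

section
/- Suppose k is odd and for all 1 ≤ α < β < γ < δ ≤ k the tetrahedral intersection numbers satisfy |M_α ∩ M_β ∩ M_γ ∩ M_δ| ≤ d − 7 (as an inequality of integers). Then C(k,4)·(d−7) ≥ (C((k+1)/2, 4) + C((k−1)/2, 4))·d, where C(m,4) denotes the binomial coefficient m choose 4. -/
/-!
Let `deg x` be the number of `α` with `x ∈ M α`. Double counting gives
`∑_{|s| = 4} |⋂_{α ∈ s} M α| = ∑_x C(deg x, 4)`, so the hypothesis bounds this sum above by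
`C(k, 4) (d - 7)`. Admissibility forces `deg (σ x) = k - deg x`, and by convexity of `C(·, 4)`
a split `a + b = k = 2m + 1` minimises `C(a, 4) + C(b, 4)` when balanced, at
`C(m + 1, 4) + C(m, 4)`; pairing each `x` with `σ x` bounds the sum below by `d` times that.
-/

open Finset

namespace Nat

lemma choose_succ_add_choose_succ_le (r : ℕ) {a b : ℕ} (hab : a ≤ b) :
    (a + 1).choose r + (b + 1).choose r ≤ a.choose r + (b + 2).choose r := by
  cases r with
  | zero => simp
  | succ r =>
    rw [choose_succ_succ' a, choose_succ_succ' (b + 1)]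
    have := choose_le_choose r (show a ≤ b + 1 by omega)
    omega

lemma choose_add_choose_le_of_add_eq (r : ℕ) {m a b : ℕ} (h : a + b = 2 * m + 1) :
    (m + 1).choose r + m.choose r ≤ a.choose r + b.choose r := by
  wlog hab : a ≤ b generalizing a b
  · rw [add_comm (a.choose r)]
    exact this (b := a) (a := b) (by omega) (by omega)
  suffices spread :
      ∀ j ≤ m, (m + 1).choose r + m.choose r ≤ (m - j).choose r + (m + 1 + j).choose r by
    have := spread (m - a) (by omega)
    rwa [show m - (m - a) = a by omega, show m + 1 + (m - a) = b by omega] at this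
  intro j hj
  induction j with
  | zero => simp [add_comm]
  | succ j ih =>
    have step := choose_succ_add_choose_succ_le r (show m - (j + 1) ≤ m + j by omega)
    rw [show m - (j + 1) + 1 = m - j by omega, show m + j + 1 = m + 1 + j by omega,
      show m + j + 2 = m + 1 + (j + 1) by omega] at step
    exact (ih (by omega)).trans step

end Nat

lemma exists_filter_forall_mem_eq_inter_of_card_eq_four {ι X : Type*} [LinearOrder ι]
    [Fintype X] [DecidableEq X] (M : ι → Finset X)
    {s : Finset ι} (hs : #s = 4) :
    ∃ α β γ δ, α < β ∧ β < γ ∧ γ < δ ∧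
      ({x | ∀ ε ∈ s, x ∈ M ε} : Finset X) = M α ∩ M β ∩ M γ ∩ M δ := by
  set f := s.orderEmbOfFin hs
  refine ⟨f 0, f 1, f 2, f 3, f.strictMono (by decide), f.strictMono (by decide),
    f.strictMono (by decide), ?_⟩
  have hrange : ∀ ε ∈ s, ∃ i, f i = ε := fun ε hε => by
    rw [← Set.mem_range, range_orderEmbOfFin]
    exact hε
  ext x
  simp only [mem_filter, mem_univ, true_and, mem_inter]
  constructor
  · intro h
    exact ⟨⟨⟨h _ (orderEmbOfFin_mem s hs 0), h _ (orderEmbOfFin_mem s hs 1)⟩,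
      h _ (orderEmbOfFin_mem s hs 2)⟩, h _ (orderEmbOfFin_mem s hs 3)⟩
  · rintro ⟨⟨⟨h0, h1⟩, h2⟩, h3⟩ ε hε
    obtain ⟨i, rfl⟩ := hrange ε hε
    fin_cases i <;> assumption

section Family

variable {ι X : Type*} [Fintype ι] [DecidableEq X]

def familyDegree (M : ι → Finset X) (x : X) : ℕ := #{α | x ∈ M α}

lemma familyDegree_add_familyDegree {M : ι → Finset X} {x y : X}
    (h : ∀ α, y ∈ M α ↔ x ∉ M α) :
    familyDegree M x + familyDegree M y = Fintype.card ι := by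
  simp only [familyDegree, h]
  exact card_filter_add_card_filter_not _

variable [Fintype X]

lemma sum_card_filter_forall_mem_eq_sum_choose_familyDegree (M : ι → Finset X) (r : ℕ) :
    ∑ s ∈ powersetCard r univ, #{x | ∀ α ∈ s, x ∈ M α} = ∑ x, (familyDegree M x).choose r := by
  refine (sum_card_bipartiteAbove_eq_sum_card_bipartiteBelow (s := powersetCard r univ)
    (t := univ) (r := fun s x => ∀ α ∈ s, x ∈ M α)).trans ?_
  refine sum_congr rfl fun x _ => ?_
  rw [familyDegree, ← card_powersetCard]
  congr 1
  ext s
  simp [bipartiteBelow, subset_iff, and_comm]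

lemma sum_choose_familyDegree_le (M : ι → Finset X) (r : ℕ) {B : ℤ}
    (hB : ∀ s : Finset ι, #s = r → (#{x | ∀ α ∈ s, x ∈ M α} : ℤ) ≤ B) :
    ((∑ x, (familyDegree M x).choose r : ℕ) : ℤ) ≤ (Fintype.card ι).choose r * B := by
  rw [← sum_card_filter_forall_mem_eq_sum_choose_familyDegree, Nat.cast_sum]
  calc ∑ s ∈ powersetCard r univ, (#{x | ∀ α ∈ s, x ∈ M α} : ℤ)
      ≤ ∑ _s ∈ powersetCard r univ, B := sum_le_sum fun s hs => hB s (mem_powersetCard.1 hs).2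
    _ = (Fintype.card ι).choose r * B := by simp

end Family

lemma Function.Involutive.card_mul_le_two_mul_sum {X : Type*} [Fintype X] {σ : X → X}
    (hσ : Function.Involutive σ) (g : X → ℕ) {c : ℕ} (hc : ∀ x, c ≤ g x + g (σ x)) :
    Fintype.card X * c ≤ 2 * ∑ x, g x :=
  calc Fintype.card X * c = ∑ _x : X, c := by simp [mul_comm]
    _ ≤ ∑ x, (g x + g (σ x)) := sum_le_sum fun x _ => hc x
    _ = 2 * ∑ x, g x := by rw [sum_add_distrib, hσ.bijective.sum_comp g]; ring

theorem tetrahedral_constraint_odd_general {X : Type*} [Fintype X] [DecidableEq X]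
    (d k : ℕ) (hodd : Odd k)
    (hX : Fintype.card X = 2 * d)
    (σ : X → X) (hσinv : ∀ x, σ (σ x) = x)
    (M : Fin k → Finset X)
    (hM : ∀ α, ∀ x : X, x ∈ M α ↔ σ x ∉ M α)
    (ht : ∀ α β γ δ : Fin k, α < β → β < γ → γ < δ →
      ((M α ∩ M β ∩ M γ ∩ M δ).card : ℤ) ≤ (d : ℤ) - 7) :
    (Nat.choose k 4 : ℤ) * ((d : ℤ) - 7)
      ≥ ((Nat.choose ((k + 1) / 2) 4 + Nat.choose ((k - 1) / 2) 4 : ℕ) : ℤ) * (d : ℤ) := by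
  obtain ⟨m, hm⟩ := hodd
  set S := ∑ x, (familyDegree M x).choose 4
  have hupper : (S : ℤ) ≤ k.choose 4 * (d - 7) := by
    rw [← Fintype.card_fin k]
    refine sum_choose_familyDegree_le M 4 fun s hs => ?_
    obtain ⟨α, β, γ, δ, hαβ, hβγ, hγδ, hinter⟩ :=
      exists_filter_forall_mem_eq_inter_of_card_eq_four M hs
    rw [hinter]
    exact ht α β γ δ hαβ hβγ hγδ
  have hlower : 2 * d * ((m + 1).choose 4 + m.choose 4) ≤ 2 * S := by
    rw [← hX]
    refine Function.Involutive.card_mul_le_two_mul_sum hσinv _ fun x => ?_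
    refine Nat.choose_add_choose_le_of_add_eq 4 ?_
    rw [familyDegree_add_familyDegree fun α => by rw [hM α (σ x), hσinv], Fintype.card_fin, hm]
  rw [show (k + 1) / 2 = m + 1 by omega, show (k - 1) / 2 = m by omega]
  have hlower' : (2 * d * ((m + 1).choose 4 + m.choose 4) : ℤ) ≤ 2 * S := by exact_mod_cast hlower
  push_cast
  linarith

/-- If `k` is odd and all tetrahedral intersection numbers satisfy
`|M α ∩ M β ∩ M γ ∩ M δ| ≤ d - 7` (as integers), then
`C(k,4) * (d - 7) ≥ (C((k+1)/2, 4) + C((k-1)/2, 4)) * d`. -/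
theorem tetrahedral_constraint_odd {X : Type*} [Fintype X] [DecidableEq X]
    (d k : ℕ) (hd : 0 < d) (hk : 0 < k) (hodd : Odd k)
    (hX : Fintype.card X = 2 * d)
    (σ : X → X) (hσinv : ∀ x, σ (σ x) = x) (hσfpf : ∀ x, σ x ≠ x)
    (M : Fin k → Finset X)
    (hM : ∀ α, ∀ x : X, x ∈ M α ↔ σ x ∉ M α)
    (ht : ∀ α β γ δ : Fin k, α < β → β < γ → γ < δ →
      ((M α ∩ M β ∩ M γ ∩ M δ).card : ℤ) ≤ (d : ℤ) - 7) :
    (Nat.choose k 4 : ℤ) * ((d : ℤ) - 7)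
      ≥ ((Nat.choose ((k + 1) / 2) 4 + Nat.choose ((k - 1) / 2) 4 : ℕ) : ℤ) * (d : ℤ) :=
  tetrahedral_constraint_odd_general d k hodd hX σ hσinv M hM ht
end

section
/- Suppose k is even and for all 1 ≤ α < β < γ < δ ≤ k the tetrahedral intersection numbers satisfy |M_α ∩ M_β ∩ M_γ ∩ M_δ| ≤ d − 7 (as an inequality of integers). Then C(k,4)·(d−7) ≥ 2·C(k/2, 4)·d, where C(m,4) denotes the binomial coefficient m choose 4. -/
/-!
Let `deg x` be the number of indices `α` with `x ∈ M α`. Since each `M α` contains exactly one of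
`x` and `σ x`, `deg x + deg (σ x) = k`. Counting pairs (point, 4-set of indices) gives
`∑_T |⋂_{α ∈ T} M α| = ∑_x C(deg x, 4)`; the left side is at most `C(k, 4) (d - 7)`. By convexity
of `C(·, 4)`, `C(a, 4) + C(k - a, 4) ≥ 2 C(k/2, 4)`, so summing over the pairs `{x, σ x}` bounds
the right side below by `2d C(k/2, 4)`.
-/

open Finset

namespace Nat

theorem two_mul_choose_le_choose_sub_add_choose_add (m t r : ℕ) :
    2 * m.choose r ≤ (m - t).choose r + (m + t).choose r := by
  induction t with
  | zero => simp [two_mul]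
  | succ t ih =>
    cases r with
    | zero => simp
    | succ s =>
      -- Pascal's rule on both sides: moving the pair apart adds `(m + t).choose s` on the
      -- right and removes at most `(m - t - 1).choose s ≤ (m + t).choose s` on the left.
      have hright := choose_succ_succ' (m + t) s
      have hleft :
          (m - t).choose (s + 1) ≤ (m - (t + 1)).choose s + (m - (t + 1)).choose (s + 1) := by
        rcases Nat.lt_or_ge t m with h | h
        · rw [show m - t = m - (t + 1) + 1 by omega, choose_succ_succ']
        · simp [show m - t = 0 by omega]
      have hmono : (m - (t + 1)).choose s ≤ (m + t).choose s := choose_le_choose s (by omega)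
      rw [← add_assoc]
      omega

theorem two_mul_choose_le_choose_add_choose {m a b : ℕ} (h : a + b = 2 * m) (r : ℕ) :
    2 * m.choose r ≤ a.choose r + b.choose r := by
  rcases le_total a m with ha | ha
  · obtain rfl : b = m + (m - a) := by omega
    simpa [Nat.sub_sub_self ha] using two_mul_choose_le_choose_sub_add_choose_add m (m - a) r
  · obtain rfl : b = m - (a - m) := by omega
    simpa [Nat.add_sub_cancel' ha, add_comm] using
      two_mul_choose_le_choose_sub_add_choose_add m (a - m) r

end Nat

namespace Finset

variable {ι X : Type*} [Fintype ι] [DecidableEq X]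

theorem sum_powersetCard_card_filter_forall_mem [Fintype X] (M : ι → Finset X) (r : ℕ) :
    ∑ T ∈ powersetCard r univ, #{x | ∀ α ∈ T, x ∈ M α} =
      ∑ x, (#{α | x ∈ M α}).choose r :=
  calc ∑ T ∈ powersetCard r univ, #{x | ∀ α ∈ T, x ∈ M α}
      = ∑ x, #{T ∈ powersetCard r univ | ∀ α ∈ T, x ∈ M α} := by
        simp only [card_filter]; exact sum_comm
    _ = ∑ x, #(powersetCard r {α | x ∈ M α}) := by
        congr! 2 with x
        ext T
        simp [subset_iff, and_comm]
    _ = ∑ x, (#{α | x ∈ M α}).choose r := by simp only [card_powersetCard]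

theorem card_filter_mem_add_card_filter_mem_of_iff_not_mem {M : ι → Finset X} {x y : X}
    (h : ∀ α, y ∈ M α ↔ x ∉ M α) : #{α | x ∈ M α} + #{α | y ∈ M α} = Fintype.card ι := by
  simp_rw [h, card_filter_add_card_filter_not, card_univ]

theorem exists_lt_lt_lt_of_card_eq_four {ι : Type*} [LinearOrder ι] {T : Finset ι}
    (hT : #T = 4) : ∃ a b c e, a < b ∧ b < c ∧ c < e ∧ T = {a, b, c, e} := by
  let f := T.orderEmbOfFin hT
  refine ⟨f 0, f 1, f 2, f 3, by simp [f], by simp [f], by simp [f], ?_⟩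
  rw [← T.image_orderEmbOfFin_univ hT]
  simp [Fin.univ_succ, image_insert, f]

end Finset

theorem Fintype.card_mul_choose_le_sum_choose {X : Type*} [Fintype X] {σ : X → X}
    (hσ : σ.Bijective) {g : X → ℕ} {m : ℕ} (hg : ∀ x, g x + g (σ x) = 2 * m) (r : ℕ) :
    Fintype.card X * m.choose r ≤ ∑ x, (g x).choose r := by
  have hσ_sum : ∑ x, (g (σ x)).choose r = ∑ x, (g x).choose r :=
    Fintype.sum_bijective σ hσ _ _ fun _ => rfl
  have := sum_le_sum fun x (_ : x ∈ univ) => Nat.two_mul_choose_le_choose_add_choose (hg x) r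
  rw [sum_add_distrib, hσ_sum, sum_const, card_univ, smul_eq_mul] at this
  linarith

theorem tetrahedral_constraint_even_general {X : Type*} [Fintype X] [DecidableEq X]
    (d k : ℕ) (heven : Even k)
    (hX : Fintype.card X = 2 * d)
    (σ : X → X) (hσinv : ∀ x, σ (σ x) = x)
    (M : Fin k → Finset X)
    (hM : ∀ α, ∀ x : X, x ∈ M α ↔ σ x ∉ M α)
    (ht : ∀ α β γ δ : Fin k, α < β → β < γ → γ < δ →
      ((M α ∩ M β ∩ M γ ∩ M δ).card : ℤ) ≤ (d : ℤ) - 7) :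
    (Nat.choose k 4 : ℤ) * ((d : ℤ) - 7)
      ≥ 2 * (Nat.choose (k / 2) 4 : ℤ) * (d : ℤ) := by
  obtain ⟨m, rfl⟩ := heven
  set deg : X → ℕ := fun x => #{α | x ∈ M α}
  have hdeg (x : X) : deg x + deg (σ x) = 2 * m := by
    rw [card_filter_mem_add_card_filter_mem_of_iff_not_mem fun α => by rw [hM α (σ x), hσinv],
      Fintype.card_fin, two_mul]
  have hlower : 2 * d * m.choose 4 ≤ ∑ x, (deg x).choose 4 :=
    hX ▸ Fintype.card_mul_choose_le_sum_choose (Function.Involutive.bijective hσinv) hdeg 4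
  have hupper : ((∑ x, (deg x).choose 4 : ℕ) : ℤ) ≤ (m + m).choose 4 * ((d : ℤ) - 7) := by
    rw [← sum_powersetCard_card_filter_forall_mem, Nat.cast_sum]
    calc _ ≤ ∑ T ∈ powersetCard 4 (univ : Finset (Fin (m + m))), ((d : ℤ) - 7) :=
          sum_le_sum fun T hT => ?_
      _ = _ := by rw [sum_const, card_powersetCard, card_univ, Fintype.card_fin, nsmul_eq_mul]
    obtain ⟨a, b, c, e, hab, hbc, hce, rfl⟩ :=
      exists_lt_lt_lt_of_card_eq_four (mem_powersetCard.1 hT).2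
    refine le_of_eq_of_le ?_ (ht a b c e hab hbc hce)
    congr 2
    ext x
    simp
  rw [show (m + m) / 2 = m by omega]
  have := (Nat.cast_le (α := ℤ)).2 hlower |>.trans hupper
  push_cast at this
  linarith

/-- If `k` is even and all tetrahedral intersection numbers satisfy
`|M α ∩ M β ∩ M γ ∩ M δ| ≤ d - 7` (as integers), then
`C(k,4) * (d - 7) ≥ 2 * C(k/2, 4) * d`. -/
theorem tetrahedral_constraint_even {X : Type*} [Fintype X] [DecidableEq X]
    (d k : ℕ) (hd : 0 < d) (hk : 0 < k) (heven : Even k)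
    (hX : Fintype.card X = 2 * d)
    (σ : X → X) (hσinv : ∀ x, σ (σ x) = x) (hσfpf : ∀ x, σ x ≠ x)
    (M : Fin k → Finset X)
    (hM : ∀ α, ∀ x : X, x ∈ M α ↔ σ x ∉ M α)
    (ht : ∀ α β γ δ : Fin k, α < β → β < γ → γ < δ →
      ((M α ∩ M β ∩ M γ ∩ M δ).card : ℤ) ≤ (d : ℤ) - 7) :
    (Nat.choose k 4 : ℤ) * ((d : ℤ) - 7)
      ≥ 2 * (Nat.choose (k / 2) 4 : ℤ) * (d : ℤ) :=
  tetrahedral_constraint_even_general d k heven hX σ hσinv M hM ht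
end

section
/- Suppose |M_α ∩ M_β| ≤ 2 for all 1 ≤ α < β ≤ 3. Then |M_α ∩ M_β| = 2 for every pair, the triple intersection M_1 ∩ M_2 ∩ M_3 is empty, every element of X belongs to exactly one or exactly two of the three sets, and exactly 6 elements belong to exactly two of the sets while exactly 6 belong to exactly one. -/
/-!
An element lying in `c` of the three sets lies in `c.choose 2` of the pairwise intersections,
and by admissibility its partner `σ x` lies in `3 - c` of the sets. Since
`c.choose 2 + (3 - c).choose 2` is `1` for `c ∈ {1, 2}` and `3` otherwise, summing over the
12 elements gives `2 (|M₁ ∩ M₂| + |M₁ ∩ M₃| + |M₂ ∩ M₃|) ≥ 12`. The hypotheses force equality,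
hence `c ∈ {1, 2}` everywhere, and `σ` exchanges the elements with `c = 1` and `c = 2`.
-/

open Finset Function

namespace Function.Involutive

variable {X : Type*} [Fintype X] {σ : X → X}

theorem sum_add_sum_comp (hσ : Involutive σ) (f : X → ℕ) :
    ∑ x, (f x + f (σ x)) = 2 * ∑ x, f x := by
  rw [sum_add_distrib, two_mul,
    Fintype.sum_equiv (hσ.toPerm σ) (fun x => f (σ x)) f fun _ => rfl]

theorem card_le_two_mul_sum (hσ : Involutive σ) {f : X → ℕ} (hf : ∀ x, 1 ≤ f x + f (σ x)) :
    Fintype.card X ≤ 2 * ∑ x, f x := by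
  rw [← hσ.sum_add_sum_comp, Fintype.card_eq_sum_ones]
  exact sum_le_sum fun x _ => hf x

theorem add_comp_eq_one_of_two_mul_sum_le_card (hσ : Involutive σ) {f : X → ℕ}
    (hf : ∀ x, 1 ≤ f x + f (σ x)) (hsum : 2 * ∑ x, f x ≤ Fintype.card X) (x : X) :
    f x + f (σ x) = 1 := by
  have hle : ∀ y ∈ (univ : Finset X), 1 ≤ f y + f (σ y) := fun y _ => hf y
  have heq : ∑ _y : X, 1 = ∑ y, (f y + f (σ y)) := by
    rw [← Fintype.card_eq_sum_ones, hσ.sum_add_sum_comp]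
    exact le_antisymm (hσ.card_le_two_mul_sum hf) hsum
  exact ((sum_eq_sum_iff_of_le hle).1 heq x (mem_univ x)).symm

theorem card_filter_eq_card_filter_of_add_comp_eq (hσ : Involutive σ) {g : X → ℕ} {n : ℕ}
    (hg : ∀ x, g x + g (σ x) = n) {k l : ℕ} (hkl : k + l = n) :
    #{x | g x = k} = #{x | g x = l} := by
  refine card_nbij' σ σ ?_ ?_ (fun x _ => hσ x) (fun x _ => hσ x) <;>
  · intro x hx
    simp only [coe_filter, mem_univ, true_and, Set.mem_ofPred_eq] at hx ⊢
    have := hg x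
    omega

end Function.Involutive

theorem card_filter_eq_add_card_filter_eq {X : Type*} [Fintype X] {g : X → ℕ} {k l : ℕ}
    (hg : ∀ x, g x = k ∨ g x = l) (hkl : k ≠ l) :
    #{x | g x = k} + #{x | g x = l} = Fintype.card X := by
  rw [← card_univ, ← card_filter_add_card_filter_not (s := univ) (g · = k)]
  congr 2
  ext x
  have := hg x
  simp only [mem_filter, mem_univ, true_and]
  omega

theorem Nat.one_le_choose_two_add_choose_two {m n : ℕ} (h : m + n = 3) :
    1 ≤ m.choose 2 + n.choose 2 := by
  obtain rfl : n = 3 - m := by omega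
  have : m ≤ 3 := by omega
  interval_cases m <;> decide

theorem Nat.choose_two_add_choose_two_eq_one_iff {m n : ℕ} (h : m + n = 3) :
    m.choose 2 + n.choose 2 = 1 ↔ m = 1 ∨ m = 2 := by
  obtain rfl : n = 3 - m := by omega
  have : m ≤ 3 := by omega
  interval_cases m <;> decide

section ThreeSets

variable {X : Type*}

def IsAdmissible (σ : X → X) (M : Finset X) : Prop :=
  ∀ x, x ∈ M ↔ σ x ∉ M

theorem IsAdmissible.apply_mem_iff {σ : X → X} (hσ : Involutive σ) {M : Finset X}
    (hM : IsAdmissible σ M) (x : X) : σ x ∈ M ↔ x ∉ M := by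
  rw [hM (σ x), hσ x]

variable [DecidableEq X]

def memCount (M₁ M₂ M₃ : Finset X) (x : X) : ℕ :=
  (if x ∈ M₁ then 1 else 0) + (if x ∈ M₂ then 1 else 0) + (if x ∈ M₃ then 1 else 0)

theorem memCount_add_memCount_apply {σ : X → X} (hσ : Involutive σ) {M₁ M₂ M₃ : Finset X}
    (hM₁ : IsAdmissible σ M₁) (hM₂ : IsAdmissible σ M₂) (hM₃ : IsAdmissible σ M₃) (x : X) :
    memCount M₁ M₂ M₃ x + memCount M₁ M₂ M₃ (σ x) = 3 := by
  simp only [memCount, hM₁.apply_mem_iff hσ, hM₂.apply_mem_iff hσ, hM₃.apply_mem_iff hσ]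
  split_ifs <;> simp_all

theorem choose_two_memCount (M₁ M₂ M₃ : Finset X) (x : X) :
    (memCount M₁ M₂ M₃ x).choose 2 =
      (if x ∈ M₁ ∩ M₂ then 1 else 0) + (if x ∈ M₁ ∩ M₃ then 1 else 0) +
        (if x ∈ M₂ ∩ M₃ then 1 else 0) := by
  simp only [memCount, mem_inter]
  split_ifs <;> simp_all

theorem sum_choose_two_memCount [Fintype X] (M₁ M₂ M₃ : Finset X) :
    ∑ x, (memCount M₁ M₂ M₃ x).choose 2 = #(M₁ ∩ M₂) + #(M₁ ∩ M₃) + #(M₂ ∩ M₃) := by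
  simp only [choose_two_memCount, sum_add_distrib, sum_ite_mem, univ_inter, sum_const,
    smul_eq_mul, mul_one]

end ThreeSets

theorem twelve_dim_three_spinors_general {X : Type*} [Fintype X] [DecidableEq X]
    (hX : Fintype.card X = 12)
    (σ : X → X) (hσinv : ∀ x, σ (σ x) = x)
    (M₁ M₂ M₃ : Finset X)
    (hM₁ : ∀ x : X, x ∈ M₁ ↔ σ x ∉ M₁)
    (hM₂ : ∀ x : X, x ∈ M₂ ↔ σ x ∉ M₂)
    (hM₃ : ∀ x : X, x ∈ M₃ ↔ σ x ∉ M₃)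
    (h₁₂ : (M₁ ∩ M₂).card ≤ 2) (h₁₃ : (M₁ ∩ M₃).card ≤ 2) (h₂₃ : (M₂ ∩ M₃).card ≤ 2)
    (cnt : X → ℕ)
    (hcnt : ∀ x, cnt x =
      (if x ∈ M₁ then 1 else 0) + (if x ∈ M₂ then 1 else 0) + (if x ∈ M₃ then 1 else 0)) :
    (M₁ ∩ M₂).card = 2 ∧ (M₁ ∩ M₃).card = 2 ∧ (M₂ ∩ M₃).card = 2 ∧
    M₁ ∩ M₂ ∩ M₃ = ∅ ∧
    (∀ x : X, cnt x = 1 ∨ cnt x = 2) ∧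
    (univ.filter (fun x : X => cnt x = 2)).card = 6 ∧
    (univ.filter (fun x : X => cnt x = 1)).card = 6 := by
  obtain rfl : cnt = memCount M₁ M₂ M₃ := funext hcnt
  have hσ : Involutive σ := hσinv
  have hcompl := memCount_add_memCount_apply hσ hM₁ hM₂ hM₃
  have hpos x := Nat.one_le_choose_two_add_choose_two (hcompl x)
  have hsum := sum_choose_two_memCount M₁ M₂ M₃
  have hsum_ge := hσ.card_le_two_mul_sum hpos
  have hone x := hσ.add_comp_eq_one_of_two_mul_sum_le_card hpos (by omega) x
  have hmem x := (Nat.choose_two_add_choose_two_eq_one_iff (hcompl x)).1 (hone x)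
  have htriple : M₁ ∩ M₂ ∩ M₃ = ∅ := eq_empty_of_forall_notMem fun x hx => by
    simp only [mem_inter] at hx
    have := hmem x
    simp [memCount, hx] at this
  have hswap := hσ.card_filter_eq_card_filter_of_add_comp_eq hcompl (k := 1) (l := 2) rfl
  have hsplit := card_filter_eq_add_card_filter_eq hmem (by decide)
  exact ⟨by omega, by omega, by omega, htriple, hmem, by omega, by omega⟩

/-- In dimension twelve (`|X| = 12`, `d = 6`): if three admissible
subsets have pairwise intersections of size at most 2, then every pairwise intersection
has size exactly 2, the triple intersection is empty, every element belongs to exactly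
one or exactly two of the three sets, and exactly 6 elements belong to exactly two of
the sets while exactly 6 belong to exactly one. -/
theorem twelve_dim_three_spinors {X : Type*} [Fintype X] [DecidableEq X]
    (hX : Fintype.card X = 12)
    (σ : X → X) (hσinv : ∀ x, σ (σ x) = x) (hσfpf : ∀ x, σ x ≠ x)
    (M₁ M₂ M₃ : Finset X)
    (hM₁ : ∀ x : X, x ∈ M₁ ↔ σ x ∉ M₁)
    (hM₂ : ∀ x : X, x ∈ M₂ ↔ σ x ∉ M₂)
    (hM₃ : ∀ x : X, x ∈ M₃ ↔ σ x ∉ M₃)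
    (h₁₂ : (M₁ ∩ M₂).card ≤ 2) (h₁₃ : (M₁ ∩ M₃).card ≤ 2) (h₂₃ : (M₂ ∩ M₃).card ≤ 2)
    (cnt : X → ℕ)
    (hcnt : ∀ x, cnt x =
      (if x ∈ M₁ then 1 else 0) + (if x ∈ M₂ then 1 else 0) + (if x ∈ M₃ then 1 else 0)) :
    (M₁ ∩ M₂).card = 2 ∧ (M₁ ∩ M₃).card = 2 ∧ (M₂ ∩ M₃).card = 2 ∧
    M₁ ∩ M₂ ∩ M₃ = ∅ ∧
    (∀ x : X, cnt x = 1 ∨ cnt x = 2) ∧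
    (univ.filter (fun x : X => cnt x = 2)).card = 6 ∧
    (univ.filter (fun x : X => cnt x = 1)).card = 6 :=
  twelve_dim_three_spinors_general hX σ hσinv M₁ M₂ M₃ hM₁ hM₂ hM₃ h₁₂ h₁₃ h₂₃ cnt hcnt
end

section
/- Suppose |M_α ∩ M_β| ≤ 3 for all 1 ≤ α < β ≤ 3, and let s = |M_1 ∩ M_2| + |M_1 ∩ M_3| + |M_2 ∩ M_3|. Then s = 7 + 2·|M_1 ∩ M_2 ∩ M_3|, and consequently either s = 7 and the triple intersection M_1 ∩ M_2 ∩ M_3 is empty, or s = 9, in which case each of the three pairwise intersections has exactly 3 elements and the triple intersection consists of exactly one element. -/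
/-!
Since `σ` is an involution exchanging each admissible `M` with its complement, every admissible
set has `|X| / 2` elements and `σ` maps the complement of `M₁ ∪ M₂ ∪ M₃` onto `M₁ ∩ M₂ ∩ M₃`.
Inclusion–exclusion for `|M₁ ∪ M₂ ∪ M₃| = |X| - |M₁ ∩ M₂ ∩ M₃|` then gives
`2 s = |X| + 4 |M₁ ∩ M₂ ∩ M₃|`, i.e. `s = 7 + 2 |M₁ ∩ M₂ ∩ M₃|` when `|X| = 14`; the bounds
`s ≤ 9` leave only the two listed cases.
-/

open Finset

namespace Finset

variable {α : Type*} [DecidableEq α]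

theorem card_union_add_card_inter_three (A B C : Finset α) :
    #(A ∪ B ∪ C) + #(A ∩ B) + #(A ∩ C) + #(B ∩ C) = #A + #B + #C + #(A ∩ B ∩ C) := by
  have hAB := card_union_add_card_inter A B
  have hABC := card_union_add_card_inter (A ∪ B) C
  have hAC_BC := card_union_add_card_inter (A ∩ C) (B ∩ C)
  rw [union_inter_distrib_right] at hABC
  rw [inter_inter_inter_comm, inter_self] at hAC_BC
  omega

end Finset

section Admissible

variable {X : Type*} [Fintype X] [DecidableEq X]

def Admissible (σ : X → X) (M : Finset X) : Prop :=
  ∀ x, x ∈ M ↔ σ x ∉ M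

theorem Admissible.image_compl {σ : X → X} (hσ : Function.Involutive σ) {M : Finset X}
    (hM : Admissible σ M) : Mᶜ.image σ = M := by
  ext x
  simp only [mem_image, mem_compl]
  constructor
  · rintro ⟨y, hy, rfl⟩
    rwa [hM, hσ]
  · exact fun hx => ⟨σ x, (hM x).mp hx, hσ x⟩

theorem Admissible.two_mul_card {σ : X → X} (hσ : Function.Involutive σ) {M : Finset X}
    (hM : Admissible σ M) : 2 * #M = Fintype.card X := by
  have h := card_add_card_compl M
  have hcompl : #Mᶜ = #M := by
    rw [← card_image_of_injective _ hσ.injective, hM.image_compl hσ]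
  omega

theorem Admissible.card_compl_union_three {σ : X → X} (hσ : Function.Involutive σ)
    {M₁ M₂ M₃ : Finset X} (h₁ : Admissible σ M₁) (h₂ : Admissible σ M₂) (h₃ : Admissible σ M₃) :
    #(M₁ ∪ M₂ ∪ M₃)ᶜ = #(M₁ ∩ M₂ ∩ M₃) := by
  conv_rhs => rw [← h₁.image_compl hσ, ← h₂.image_compl hσ, ← h₃.image_compl hσ,
    ← image_inter _ _ hσ.injective, ← image_inter _ _ hσ.injective,
    card_image_of_injective _ hσ.injective]
  simp only [compl_union]

theorem Admissible.two_mul_sum_card_inter {σ : X → X} (hσ : Function.Involutive σ)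
    {M₁ M₂ M₃ : Finset X} (h₁ : Admissible σ M₁) (h₂ : Admissible σ M₂) (h₃ : Admissible σ M₃) :
    2 * (#(M₁ ∩ M₂) + #(M₁ ∩ M₃) + #(M₂ ∩ M₃)) = Fintype.card X + 4 * #(M₁ ∩ M₂ ∩ M₃) := by
  have hincl := card_union_add_card_inter_three M₁ M₂ M₃
  have hcompl := card_add_card_compl (M₁ ∪ M₂ ∪ M₃)
  rw [h₁.card_compl_union_three hσ h₂ h₃] at hcompl
  have := h₁.two_mul_card hσ
  have := h₂.two_mul_card hσ
  have := h₃.two_mul_card hσ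
  omega

end Admissible

theorem fourteen_dim_three_spinors_general {X : Type*} [Fintype X] [DecidableEq X]
    (hX : Fintype.card X = 14)
    (σ : X → X) (hσinv : ∀ x, σ (σ x) = x)
    (M₁ M₂ M₃ : Finset X)
    (hM₁ : ∀ x : X, x ∈ M₁ ↔ σ x ∉ M₁)
    (hM₂ : ∀ x : X, x ∈ M₂ ↔ σ x ∉ M₂)
    (hM₃ : ∀ x : X, x ∈ M₃ ↔ σ x ∉ M₃)
    (h₁₂ : (M₁ ∩ M₂).card ≤ 3) (h₁₃ : (M₁ ∩ M₃).card ≤ 3) (h₂₃ : (M₂ ∩ M₃).card ≤ 3)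
    (s : ℕ) (hs : s = (M₁ ∩ M₂).card + (M₁ ∩ M₃).card + (M₂ ∩ M₃).card) :
    s = 7 + 2 * (M₁ ∩ M₂ ∩ M₃).card ∧
    ((s = 7 ∧ M₁ ∩ M₂ ∩ M₃ = ∅) ∨
      (s = 9 ∧ (M₁ ∩ M₂).card = 3 ∧ (M₁ ∩ M₃).card = 3 ∧ (M₂ ∩ M₃).card = 3 ∧
        (M₁ ∩ M₂ ∩ M₃).card = 1)) := by
  have key := Admissible.two_mul_sum_card_inter (σ := σ) hσinv hM₁ hM₂ hM₃
  have hs' : s = 7 + 2 * #(M₁ ∩ M₂ ∩ M₃) := by omega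
  refine ⟨hs', ?_⟩
  rcases Nat.eq_zero_or_pos #(M₁ ∩ M₂ ∩ M₃) with h₀ | h₀
  · exact Or.inl ⟨by omega, card_eq_zero.mp h₀⟩
  · exact Or.inr ⟨by omega, by omega, by omega, by omega, by omega⟩

/-- In dimension fourteen (`|X| = 14`, `d = 7`): if three admissible
subsets have pairwise intersections of size at most 3, and
`s = |M₁ ∩ M₂| + |M₁ ∩ M₃| + |M₂ ∩ M₃|`, then `s = 7 + 2 * |M₁ ∩ M₂ ∩ M₃|`, and
consequently either `s = 7` and the triple intersection is empty, or `s = 9`, in which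
case each pairwise intersection has exactly 3 elements and the triple intersection
consists of exactly one element. -/
theorem fourteen_dim_three_spinors {X : Type*} [Fintype X] [DecidableEq X]
    (hX : Fintype.card X = 14)
    (σ : X → X) (hσinv : ∀ x, σ (σ x) = x) (hσfpf : ∀ x, σ x ≠ x)
    (M₁ M₂ M₃ : Finset X)
    (hM₁ : ∀ x : X, x ∈ M₁ ↔ σ x ∉ M₁)
    (hM₂ : ∀ x : X, x ∈ M₂ ↔ σ x ∉ M₂)
    (hM₃ : ∀ x : X, x ∈ M₃ ↔ σ x ∉ M₃)
    (h₁₂ : (M₁ ∩ M₂).card ≤ 3) (h₁₃ : (M₁ ∩ M₃).card ≤ 3) (h₂₃ : (M₂ ∩ M₃).card ≤ 3)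
    (s : ℕ) (hs : s = (M₁ ∩ M₂).card + (M₁ ∩ M₃).card + (M₂ ∩ M₃).card) :
    s = 7 + 2 * (M₁ ∩ M₂ ∩ M₃).card ∧
    ((s = 7 ∧ M₁ ∩ M₂ ∩ M₃ = ∅) ∨
      (s = 9 ∧ (M₁ ∩ M₂).card = 3 ∧ (M₁ ∩ M₃).card = 3 ∧ (M₂ ∩ M₃).card = 3 ∧
        (M₁ ∩ M₂ ∩ M₃).card = 1)) :=
  fourteen_dim_three_spinors_general hX σ hσinv M₁ M₂ M₃ hM₁ hM₂ hM₃ h₁₂ h₁₃ h₂₃ s hs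
end
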